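/- Let X = {x ∈ ℝⁿ : cᵀx ≤ d} be a halfspace and U ⊆ ℝⁿ a nonempty bounded set. Then X ⊖ U = {z : cᵀz ≤ d - sup_{e ∈ U} cᵀe}. -/
import Mathlib


open Matrix

/-- Pontryagin set difference: `X ⊖ Y = {z : z + y ∈ X for all y ∈ Y}`. -/
def pontryaginDiff {n : ℕ} (X Y : Set (Fin n → ℝ)) : Set (Fin n → ℝ) :=
  {z | ∀ y ∈ Y, z + y ∈ X}

theorem stmt_15 {n : ℕ} (c : Fin n → ℝ) (d : ℝ) (U : Set (Fin n → ℝ))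
    (hne : U.Nonempty) (hbdd : Bornology.IsBounded U) :
    pontryaginDiff {x | c ⬝ᵥ x ≤ d} U
      = {z | c ⬝ᵥ z ≤ d - sSup ((fun e => c ⬝ᵥ e) '' U)} := by
  have hcont : Continuous fun e : Fin n → ℝ => c ⬝ᵥ e := by
    simp only [dotProduct]
    exact continuous_finset_sum _ fun i _ => (continuous_const.mul (continuous_apply i))
  obtain ⟨M, hM⟩ := hbdd.exists_norm_le
  have hbdd' : BddAbove ((fun e => c ⬝ᵥ e) '' U) := by
    refine ⟨(∑ i, |c i|) * M, ?_⟩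
    rintro r ⟨e, he, rfl⟩
    calc c ⬝ᵥ e ≤ ∑ i, |c i| * ‖e‖ := by
          refine Finset.sum_le_sum fun i _ => ?_
          calc c i * e i ≤ |c i * e i| := le_abs_self _
            _ = |c i| * |e i| := abs_mul _ _
            _ ≤ |c i| * ‖e‖ := by
                have h1 : |e i| ≤ ‖e‖ := by simpa using norm_le_pi_norm e i
                exact mul_le_mul_of_nonneg_left h1 (abs_nonneg _)
      _ = (∑ i, |c i|) * ‖e‖ := (Finset.sum_mul ..).symm
      _ ≤ (∑ i, |c i|) * M :=
          mul_le_mul_of_nonneg_left (hM e he) (Finset.sum_nonneg fun i _ => abs_nonneg _)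
  ext z
  simp only [pontryaginDiff, Set.mem_setOf_eq, dotProduct_add]
  constructor
  · intro h
    rw [le_sub_iff_add_le]
    have : ∀ r ∈ (fun e => c ⬝ᵥ e) '' U, c ⬝ᵥ z + r ≤ d := by
      rintro r ⟨e, he, rfl⟩
      exact h e he
    have hsup : sSup ((fun e => c ⬝ᵥ e) '' U) ≤ d - c ⬝ᵥ z :=
      csSup_le (hne.image _) fun r hr => by linarith [this r hr]
    linarith
  · intro h y hy
    have hle : c ⬝ᵥ y ≤ sSup ((fun e => c ⬝ᵥ e) '' U) :=
      le_csSup hbdd' ⟨y, hy, rfl⟩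
    linarith
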